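/- arXiv:2208.09638 — 6 statements merged into one kernel-verified Lean document; each statement's English description precedes it below -/
import Mathlib

section
/- Let $\mathcal{X}$ be a finite set, $P_0$ a probability on $\mathcal{X}$, and suppose a full-data test $t : \mathcal{X} \to [0,1]$ takes at least two distinct values $q_1 < q_2$ strictly between 0 and 1. Then the corresponding $b(x,J) = \min_{x': x'_J = x_J} t(x')$ is NOT an extreme point of the polytope $\mathcal{B}$ of worst-case-monotone tests. -/
/-- The polytope of worst-case-monotone tests: [0,1]-valued functions b (x, J)
depending on x only through x_J, with size control under P0 at level alpha,
and monotonicity b (x, J) <= b (x, K). -/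
def polytopeB {ι : Type*} [Fintype ι] [DecidableEq ι]
    {𝒳 : ι → Type*} [∀ i, Fintype (𝒳 i)]
    (P0 : (∀ i, 𝒳 i) → ℝ) (α : ℝ) : Set ((∀ i, 𝒳 i) → Finset ι → ℝ) :=
  {b | (∀ x J, b x J ∈ Set.Icc (0 : ℝ) 1) ∧
    (∀ x x' (J : Finset ι), (∀ i ∈ J, x i = x' i) → b x J = b x' J) ∧
    (∑ x, P0 x * b x Finset.univ ≤ α) ∧
    (∀ x (J : Finset ι), b x J ≤ b x Finset.univ)}

/-
The values of `b` form a finite set `T ⊆ [0, 1]` containing `q₁, q₂`, and `b (x, K) = t x`.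
Take `g : ℝ → ℝ` nonzero, supported on `{q₁, q₂}`, with `∑ₓ P₀ x g (t x) = 0`. For all small `s`
the map `v ↦ v + s g v` is monotone on `T` and keeps `T` inside `[0, 1]` (it moves only the
interior points `q₁, q₂`), so composing `b` with it preserves the constraints of `𝓑`, and the
choice of `g` keeps the size unchanged. Hence `b ± s (g ∘ b) ∈ 𝓑`, and `b` is their midpoint.
-/
open Filter Topology Set Function

theorem notMem_extremePoints_of_add_mem_of_sub_mem {𝕜 E : Type*} [Ring 𝕜] [LinearOrder 𝕜]
    [IsStrictOrderedRing 𝕜] [Invertible (2 : 𝕜)] [AddCommGroup E] [Module 𝕜 E]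
    {A : Set E} {x v : E} (hv : v ≠ 0) (hadd : x + v ∈ A) (hsub : x - v ∈ A) :
    x ∉ A.extremePoints 𝕜 := fun hx =>
  hv <| add_eq_left.mp <|
    ((mem_extremePoints.mp hx).2 _ hadd _ hsub (mem_openSegment_add_sub x v)).1

theorem notMem_extremePoints_of_eventually_add_smul_mem {E : Type*} [AddCommGroup E]
    [Module ℝ E] {A : Set E} {x v : E} (hv : v ≠ 0)
    (h : ∀ᶠ s in 𝓝 (0 : ℝ), x + s • v ∈ A) : x ∉ A.extremePoints ℝ := by
  have hneg : ∀ᶠ s in 𝓝 (0 : ℝ), x + (-s) • v ∈ A :=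
    (continuous_neg.tendsto' 0 0 neg_zero).eventually h
  obtain ⟨ε, ⟨hε, hεneg⟩, hεpos⟩ :=
    ((h.and hneg).filter_mono nhdsWithin_le_nhds |>.and self_mem_nhdsWithin).exists
      (f := 𝓝[>] (0 : ℝ))
  refine notMem_extremePoints_of_add_mem_of_sub_mem (smul_ne_zero hεpos.ne' hv) hε ?_
  simpa [sub_eq_add_neg] using hεneg

theorem eventually_monotoneOn_add_mul {T : Set ℝ} (hT : T.Finite) (g : ℝ → ℝ) :
    ∀ᶠ s in 𝓝 (0 : ℝ), MonotoneOn (fun v => v + s * g v) T := by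
  have hpair : ∀ p ∈ T ×ˢ T, ∀ᶠ s in 𝓝 (0 : ℝ),
      p.1 < p.2 → p.1 + s * g p.1 < p.2 + s * g p.2 := by
    rintro ⟨v, w⟩ -
    by_cases hvw : v < w
    · have hcont : ∀ u, Tendsto (fun s : ℝ => u + s * g u) (𝓝 0) (𝓝 u) := fun u =>
        (by fun_prop : Continuous fun s : ℝ => u + s * g u).tendsto' 0 u (by simp)
      exact ((hcont v).eventually_lt (hcont w) hvw).mono fun _ h _ => h
    · exact Eventually.of_forall fun _ h => absurd h hvw
  filter_upwards [(hT.prod hT).eventually_all.2 hpair] with s hs v hv w hw hvw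
  rcases hvw.eq_or_lt with rfl | hlt
  · rfl
  · exact (hs (v, w) ⟨hv, hw⟩ hlt).le

theorem eventually_mapsTo_add_mul {T S : Set ℝ} (hT : T.Finite) (hTS : T ⊆ S) {g : ℝ → ℝ}
    (hg : ∀ v ∈ T, g v ≠ 0 → S ∈ 𝓝 v) :
    ∀ᶠ s in 𝓝 (0 : ℝ), MapsTo (fun v => v + s * g v) T S := by
  refine (hT.eventually_all.2 fun v hv => ?_).mono fun _ h v hv => h v hv
  by_cases hgv : g v = 0
  · exact Eventually.of_forall fun s => by simpa [hgv] using hTS hv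
  · exact ((by fun_prop : Continuous fun s : ℝ => v + s * g v).tendsto' 0 v (by simp)).eventually
      (hg v hv hgv)

theorem exists_sum_mul_comp_eq_zero {X : Type*} [Fintype X] (P0 t : X → ℝ) {q₁ q₂ : ℝ}
    (hq : q₁ ≠ q₂) :
    ∃ g : ℝ → ℝ, (g q₁ ≠ 0 ∨ g q₂ ≠ 0) ∧ (∀ v, g v ≠ 0 → v = q₁ ∨ v = q₂) ∧
      ∑ x, P0 x * g (t x) = 0 := by
  set m₁ := ∑ x, if t x = q₁ then P0 x else 0
  set m₂ := ∑ x, if t x = q₂ then P0 x else 0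
  obtain ⟨a, c, hac, hmass⟩ : ∃ a c : ℝ, (a ≠ 0 ∨ c ≠ 0) ∧ a * m₁ + c * m₂ = 0 := by
    by_cases h : m₁ = 0
    · exact ⟨1, 0, by simp, by simp [h]⟩
    · exact ⟨m₂, -m₁, Or.inr (neg_ne_zero.2 h), by ring⟩
  refine ⟨fun v => if v = q₁ then a else if v = q₂ then c else 0, by simpa [hq.symm] using hac,
    fun v hv => ?_, ?_⟩
  · by_contra! h
    simp [h.1, h.2] at hv
  · calc ∑ x, P0 x * (if t x = q₁ then a else if t x = q₂ then c else 0)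
        = ∑ x, (a * (if t x = q₁ then P0 x else 0) + c * (if t x = q₂ then P0 x else 0)) := by
          refine Finset.sum_congr rfl fun x _ => ?_
          by_cases h₁ : t x = q₁
          · simp [h₁, hq, mul_comm]
          · by_cases h₂ : t x = q₂ <;> simp [h₁, h₂, hq.symm, mul_comm]
      _ = a * m₁ + c * m₂ := by rw [Finset.sum_add_distrib, Finset.mul_sum, Finset.mul_sum]
      _ = 0 := hmass

theorem inf'_filter_forall_mem_univ_eq {ι : Type*} [Fintype ι] [DecidableEq ι]
    {𝒳 : ι → Type*} [∀ i, Fintype (𝒳 i)] [∀ i, DecidableEq (𝒳 i)] {β : Type*}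
    [SemilatticeInf β] (f : (∀ i, 𝒳 i) → β) (x : ∀ i, 𝒳 i)
    (h : (Finset.univ.filter fun x' : ∀ i, 𝒳 i => ∀ i ∈ Finset.univ, x' i = x i).Nonempty) :
    (Finset.univ.filter fun x' : ∀ i, 𝒳 i => ∀ i ∈ Finset.univ, x' i = x i).inf' h f = f x :=
  le_antisymm (Finset.inf'_le _ (by simp)) <| Finset.le_inf' _ _ fun y hy => by
    rw [funext fun i => (Finset.mem_filter.mp hy).2 i (Finset.mem_univ i)]

theorem comp_mem_polytopeB {ι : Type*} [Fintype ι] [DecidableEq ι]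
    {𝒳 : ι → Type*} [∀ i, Fintype (𝒳 i)] {P0 : (∀ i, 𝒳 i) → ℝ} {α : ℝ}
    {b : (∀ i, 𝒳 i) → Finset ι → ℝ} (hb : b ∈ polytopeB P0 α) {T : Set ℝ}
    (hbT : ∀ x J, b x J ∈ T) {φ : ℝ → ℝ} (hmono : MonotoneOn φ T)
    (hmaps : MapsTo φ T (Icc 0 1)) (hsize : ∑ x, P0 x * φ (b x Finset.univ) ≤ α) :
    (fun x J => φ (b x J)) ∈ polytopeB P0 α :=
  ⟨fun x J => hmaps (hbT x J), fun x x' J h => congrArg φ (hb.2.1 x x' J h), hsize,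
    fun x J => hmono (hbT x J) (hbT x _) (hb.2.2.2 x J)⟩

theorem stmt_8_general {ι : Type*} [Fintype ι] [DecidableEq ι]
    {𝒳 : ι → Type*} [∀ i, Fintype (𝒳 i)] [∀ i, DecidableEq (𝒳 i)]
    (P0 : (∀ i, 𝒳 i) → ℝ) (α : ℝ) (t : (∀ i, 𝒳 i) → ℝ)
    (q1 q2 : ℝ) (hq : 0 < q1 ∧ q1 < q2 ∧ q2 < 1)
    (hx1 : ∃ x, t x = q1) (hx2 : ∃ x, t x = q2)
    (b : (∀ i, 𝒳 i) → Finset ι → ℝ)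
    (hb : ∀ x J, b x J =
      (Finset.univ.filter fun x' : ∀ i, 𝒳 i => ∀ i ∈ J, x' i = x i).inf'
        ⟨x, Finset.mem_filter.mpr ⟨Finset.mem_univ x, fun _ _ => rfl⟩⟩ t)
    (hbB : b ∈ polytopeB P0 α) :
    b ∉ Set.extremePoints ℝ (polytopeB P0 α) := by
  obtain ⟨hq1, hq12, hq2⟩ := hq
  obtain ⟨x1, hx1⟩ := hx1
  obtain ⟨x2, hx2⟩ := hx2
  have hbt : ∀ x, b x Finset.univ = t x := fun x =>
    (hb x _).trans (inf'_filter_forall_mem_univ_eq t x _)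
  obtain ⟨g, hg_ne, hg_supp, hg_sum⟩ := exists_sum_mul_comp_eq_zero P0 t hq12.ne
  have hT : (range (uncurry b)).Finite := finite_range _
  have hbT : ∀ x J, b x J ∈ range (uncurry b) := fun x J => ⟨(x, J), rfl⟩
  have hT01 : range (uncurry b) ⊆ Icc 0 1 := by
    rintro _ ⟨⟨x, J⟩, rfl⟩
    exact hbB.1 x J
  have hg_nhds : ∀ v ∈ range (uncurry b), g v ≠ 0 → Icc (0 : ℝ) 1 ∈ 𝓝 v := fun v _ hv =>
    (hg_supp v hv).elim (fun h => Icc_mem_nhds (h ▸ hq1) (h ▸ hq12.trans hq2))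
      (fun h => Icc_mem_nhds (h ▸ hq1.trans hq12) (h ▸ hq2))
  refine notMem_extremePoints_of_eventually_add_smul_mem (v := fun x J => g (b x J)) ?_ ?_
  · intro h
    rcases hg_ne with h1 | h2
    · exact h1 (by simpa [hbt, hx1] using congr_fun₂ h x1 Finset.univ)
    · exact h2 (by simpa [hbt, hx2] using congr_fun₂ h x2 Finset.univ)
  · filter_upwards [eventually_monotoneOn_add_mul hT g,
      eventually_mapsTo_add_mul hT hT01 hg_nhds] with s hmono hmaps
    refine comp_mem_polytopeB hbB hbT hmono hmaps ?_
    simpa [hbt, mul_add, Finset.sum_add_distrib, mul_left_comm _ s, ← Finset.mul_sum, hg_sum]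
      using hbB.2.2.1

theorem stmt_8 {ι : Type*} [Fintype ι] [DecidableEq ι]
    {𝒳 : ι → Type*} [∀ i, Fintype (𝒳 i)] [∀ i, DecidableEq (𝒳 i)]
    (P0 : (∀ i, 𝒳 i) → ℝ) (hP0 : ∀ x, 0 ≤ P0 x) (hP0sum : ∑ x, P0 x = 1)
    (α : ℝ) (hα : 0 < α ∧ α < 1)
    (t : (∀ i, 𝒳 i) → ℝ) (ht : ∀ x, t x ∈ Set.Icc (0 : ℝ) 1)
    (q1 q2 : ℝ) (hq : 0 < q1 ∧ q1 < q2 ∧ q2 < 1)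
    (hx1 : ∃ x, t x = q1) (hx2 : ∃ x, t x = q2)
    (b : (∀ i, 𝒳 i) → Finset ι → ℝ)
    (hb : ∀ x J, b x J =
      (Finset.univ.filter fun x' : ∀ i, 𝒳 i => ∀ i ∈ J, x' i = x i).inf'
        ⟨x, Finset.mem_filter.mpr ⟨Finset.mem_univ x, fun _ _ => rfl⟩⟩ t)
    (hbB : b ∈ polytopeB P0 α) :
    b ∉ Set.extremePoints ℝ (polytopeB P0 α) :=
  stmt_8_general P0 α t q1 q2 hq hx1 hx2 b hb hbB
end

section
/- Let $\mathcal{X}$ be a finite set, $P_0$ a probability on $\mathcal{X}$, and $b \in \mathcal{B}$ with $b(x,K) \in \{0,1\}$ for all $x$ with $P_0(x) > 0$, and suppose the size constraint binds: $\mathbb{E}_{P_0}[b(X,K)] = \alpha$. Then there exists a probability measure $Q$ on $\mathcal{X} \times \mathcal{P}(K)$ (with $Q$ concentrated on $J = K$) such that $b$ maximizes $\sum_{x,J} b(x,J) Q(x,J)$ over all $b' \in \mathcal{B}$. -/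
open Finset

def concentratedOnUniv {X ι : Type*} [Fintype ι] [DecidableEq ι] (q : X → ℝ) :
    X → Finset ι → ℝ :=
  fun x J => if J = univ then q x else 0

section concentratedOnUniv

variable {X ι : Type*} [Fintype ι] [DecidableEq ι]

lemma concentratedOnUniv_nonneg {q : X → ℝ} (hq : ∀ x, 0 ≤ q x) (x : X) (J : Finset ι) :
    0 ≤ concentratedOnUniv q x J := by
  unfold concentratedOnUniv
  split_ifs
  exacts [hq x, le_rfl]

lemma concentratedOnUniv_of_ne_univ (q : X → ℝ) (x : X) {J : Finset ι} (hJ : J ≠ univ) :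
    concentratedOnUniv q x J = 0 :=
  if_neg hJ

lemma sum_sum_concentratedOnUniv_mul [Fintype X] (q : X → ℝ) (c : X → Finset ι → ℝ) :
    ∑ x, ∑ J, concentratedOnUniv q x J * c x J = ∑ x, q x * c x univ := by
  simp [concentratedOnUniv, ite_mul]

lemma sum_sum_concentratedOnUniv [Fintype X] (q : X → ℝ) :
    ∑ x, ∑ J : Finset ι, concentratedOnUniv q x J = ∑ x, q x := by
  simpa using sum_sum_concentratedOnUniv_mul q (fun _ (_ : Finset ι) => (1 : ℝ))

end concentratedOnUniv

section Rationalizing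

variable {X : Type*} [Fintype X] {p β β' : X → ℝ} {c : ℝ}

lemma sum_mul_add_mul_le_of_le_one (hp : ∀ x, 0 ≤ p x) (hβ : ∀ x, 0 ≤ β x)
    (hβ' : ∀ x, β' x ≤ 1) :
    ∑ x, p x * (c + β x) * β' x ≤ c * ∑ x, p x * β' x + ∑ x, p x * β x := by
  rw [mul_sum, ← sum_add_distrib]
  refine sum_le_sum fun x _ => ?_
  nlinarith [mul_nonneg (mul_nonneg (hp x) (hβ x)) (sub_nonneg.2 (hβ' x))]

lemma sum_mul_add_mul_self_of_zero_or_one (h01 : ∀ x, 0 < p x → β x = 0 ∨ β x = 1)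
    (hp : ∀ x, 0 ≤ p x) :
    ∑ x, p x * (c + β x) * β x = c * ∑ x, p x * β x + ∑ x, p x * β x := by
  rw [mul_sum, ← sum_add_distrib]
  refine sum_congr rfl fun x _ => ?_
  rcases (hp x).eq_or_lt with hpx | hpx
  · simp [← hpx]
  · rcases h01 x hpx with h | h <;> rw [h] <;> ring

lemma sum_mul_add_mul_le_self (hp : ∀ x, 0 ≤ p x) (hβ : ∀ x, 0 ≤ β x)
    (h01 : ∀ x, 0 < p x → β x = 0 ∨ β x = 1) (hc : 0 ≤ c) (hβ' : ∀ x, β' x ≤ 1)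
    (hsize : ∑ x, p x * β' x ≤ ∑ x, p x * β x) :
    ∑ x, p x * (c + β x) * β' x ≤ ∑ x, p x * (c + β x) * β x :=
  calc ∑ x, p x * (c + β x) * β' x
      ≤ c * ∑ x, p x * β' x + ∑ x, p x * β x := sum_mul_add_mul_le_of_le_one hp hβ hβ'
    _ ≤ c * ∑ x, p x * β x + ∑ x, p x * β x := by gcongr
    _ = ∑ x, p x * (c + β x) * β x := (sum_mul_add_mul_self_of_zero_or_one h01 hp).symm

end Rationalizing

theorem stmt_9 {ι : Type*} [Fintype ι] [DecidableEq ι]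
    {𝒳 : ι → Type*} [∀ i, Fintype (𝒳 i)]
    (P0 : (∀ i, 𝒳 i) → ℝ) (hP0 : ∀ x, 0 ≤ P0 x) (hP0sum : ∑ x, P0 x = 1)
    (α : ℝ) (hα : 0 < α ∧ α < 1)
    (b : (∀ i, 𝒳 i) → Finset ι → ℝ) (hbB : b ∈ polytopeB P0 α)
    (h01 : ∀ x, 0 < P0 x → b x Finset.univ = 0 ∨ b x Finset.univ = 1)
    (hbind : ∑ x, P0 x * b x Finset.univ = α) :
    ∃ Q : (∀ i, 𝒳 i) → Finset ι → ℝ,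
      (∀ x J, 0 ≤ Q x J) ∧
      (∑ x, ∑ J : Finset ι, Q x J = 1) ∧
      (∀ x (J : Finset ι), J ≠ Finset.univ → Q x J = 0) ∧
      (∀ b' ∈ polytopeB P0 α,
        ∑ x, ∑ J : Finset ι, Q x J * b' x J ≤ ∑ x, ∑ J : Finset ι, Q x J * b x J) := by
  obtain ⟨hb01, -, -, -⟩ := hbB
  have hc : 0 ≤ 1 - α := by linarith [hα.2]
  have hb0 : ∀ x, 0 ≤ b x univ := fun x => (hb01 x univ).1
  refine ⟨concentratedOnUniv fun x => P0 x * (1 - α + b x univ), ?_, ?_,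
    fun x _ => concentratedOnUniv_of_ne_univ _ x, ?_⟩
  · exact concentratedOnUniv_nonneg fun x => mul_nonneg (hP0 x) (add_nonneg hc (hb0 x))
  · simp only [sum_sum_concentratedOnUniv, mul_add, sum_add_distrib, ← sum_mul, hP0sum, hbind]
    ring
  · rintro b' ⟨hb'01, -, hb'size, -⟩
    simp only [sum_sum_concentratedOnUniv_mul]
    exact sum_mul_add_mul_le_self hP0 hb0 h01 hc (fun x => (hb'01 x univ).2)
      (hbind ▸ hb'size)
end

section
/- Suppose the analyst's prior puts probability one on a fixed availability set $J' \subseteq K$: $Q(X_{J'}, J = J')$ with $Q(J = J') = 1$. Then within the polytope $\mathcal{B}$ of worst-case-monotone tests, there exists a maximizer $b$ of expected power $\mathbb{E}_Q[b(X_J, J)]$ such that $b(x, K) = b(x_{J'}, J')$ for all $x$, i.e., the optimal test depends only on the coordinates in $J'$ and rejects with probability 0 on any reported set not containing $J'$. -/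
section

variable {ι : Type*} [DecidableEq ι] {𝒳 : ι → Type*}

def restrictTo (J' : Finset ι) (b : (∀ i, 𝒳 i) → Finset ι → ℝ) :
    (∀ i, 𝒳 i) → Finset ι → ℝ :=
  fun x J => if J' ⊆ J then b x J' else 0

variable (J' : Finset ι) (b : (∀ i, 𝒳 i) → Finset ι → ℝ) (x : ∀ i, 𝒳 i)

@[simp]
theorem restrictTo_self : restrictTo J' b x J' = b x J' :=
  if_pos subset_rfl

@[simp]
theorem restrictTo_univ [Fintype ι] : restrictTo J' b x Finset.univ = b x J' :=
  if_pos (Finset.subset_univ J')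

theorem restrictTo_of_not_subset {J : Finset ι} (h : ¬ J' ⊆ J) : restrictTo J' b x J = 0 :=
  if_neg h

end

section

variable {ι : Type*} [Fintype ι] [DecidableEq ι] {𝒳 : ι → Type*} [∀ i, Fintype (𝒳 i)]

def expectedPower (Q : (∀ i, 𝒳 i) → Finset ι → ℝ) (b : (∀ i, 𝒳 i) → Finset ι → ℝ) : ℝ :=
  ∑ x, ∑ J, Q x J * b x J

theorem continuous_expectedPower (Q : (∀ i, 𝒳 i) → Finset ι → ℝ) :
    Continuous (expectedPower Q) := by
  unfold expectedPower
  fun_prop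

theorem expectedPower_eq_sum_of_concentrated {Q : (∀ i, 𝒳 i) → Finset ι → ℝ} {J' : Finset ι}
    (hQ : ∀ x J, J ≠ J' → Q x J = 0) (b : (∀ i, 𝒳 i) → Finset ι → ℝ) :
    expectedPower Q b = ∑ x, Q x J' * b x J' :=
  Finset.sum_congr rfl fun x _ =>
    Finset.sum_eq_single J' (fun J _ hJ => by rw [hQ x J hJ, zero_mul])
      (fun h => absurd (Finset.mem_univ J') h)

theorem expectedPower_restrictTo {Q : (∀ i, 𝒳 i) → Finset ι → ℝ} (J' : Finset ι)
    (hQ : ∀ x J, J ≠ J' → Q x J = 0) (b : (∀ i, 𝒳 i) → Finset ι → ℝ) :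
    expectedPower Q (restrictTo J' b) = expectedPower Q b := by
  simp only [expectedPower_eq_sum_of_concentrated hQ, restrictTo_self]

theorem isClosed_polytopeB (P0 : (∀ i, 𝒳 i) → ℝ) (α : ℝ) : IsClosed (polytopeB P0 α) := by
  have hev : ∀ x J, Continuous fun b : (∀ i, 𝒳 i) → Finset ι → ℝ => b x J := fun x J => by
    fun_prop
  simp only [polytopeB, Set.ofPred_and, Set.ofPred_forall]
  refine (isClosed_iInter fun x => isClosed_iInter fun J => isClosed_Icc.preimage (hev x J)).inter
    ((isClosed_iInter fun x => isClosed_iInter fun x' => isClosed_iInter fun J =>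
      isClosed_iInter fun _ => isClosed_eq (hev x J) (hev x' J)).inter
    ((isClosed_le (by fun_prop) continuous_const).inter
      (isClosed_iInter fun x => isClosed_iInter fun J => isClosed_le (hev x J) (hev x _))))

theorem isCompact_polytopeB (P0 : (∀ i, 𝒳 i) → ℝ) (α : ℝ) : IsCompact (polytopeB P0 α) :=
  (isCompact_univ_pi fun _ => isCompact_univ_pi fun _ => isCompact_Icc).of_isClosed_subset
    (isClosed_polytopeB P0 α) fun _ hb x _ J _ => hb.1 x J

theorem zero_mem_polytopeB (P0 : (∀ i, 𝒳 i) → ℝ) {α : ℝ} (hα : 0 ≤ α) :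
    0 ∈ polytopeB P0 α := by
  refine ⟨fun _ _ => ⟨le_rfl, zero_le_one⟩, fun _ _ _ _ => rfl, ?_, fun _ _ => le_rfl⟩
  simpa using hα

theorem exists_isMaxOn_expectedPower (P0 : (∀ i, 𝒳 i) → ℝ) {α : ℝ} (hα : 0 ≤ α)
    (Q : (∀ i, 𝒳 i) → Finset ι → ℝ) :
    ∃ b ∈ polytopeB P0 α, IsMaxOn (expectedPower Q) (polytopeB P0 α) b :=
  (isCompact_polytopeB P0 α).exists_isMaxOn ⟨0, zero_mem_polytopeB P0 hα⟩
    (continuous_expectedPower Q).continuousOn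

theorem restrictTo_mem_polytopeB {P0 : (∀ i, 𝒳 i) → ℝ} {α : ℝ} (hP0 : ∀ x, 0 ≤ P0 x)
    (J' : Finset ι) {b : (∀ i, 𝒳 i) → Finset ι → ℝ} (hb : b ∈ polytopeB P0 α) :
    restrictTo J' b ∈ polytopeB P0 α := by
  obtain ⟨hb01, hbloc, hbsize, hbmono⟩ := hb
  refine ⟨fun x J => ?_, fun x x' J hxx' => ?_, ?_, fun x J => ?_⟩
  · unfold restrictTo
    split_ifs
    exacts [hb01 x J', ⟨le_rfl, zero_le_one⟩]
  · unfold restrictTo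
    split_ifs with h
    exacts [hbloc x x' J' fun i hi => hxx' i (h hi), rfl]
  · calc ∑ x, P0 x * restrictTo J' b x Finset.univ = ∑ x, P0 x * b x J' := by
          simp only [restrictTo_univ]
      _ ≤ ∑ x, P0 x * b x Finset.univ :=
          Finset.sum_le_sum fun x _ => mul_le_mul_of_nonneg_left (hbmono x J') (hP0 x)
      _ ≤ α := hbsize
  · rw [restrictTo_univ]
    unfold restrictTo
    split_ifs
    exacts [le_rfl, (hb01 x J').1]

end

theorem stmt_11_general {ι : Type*} [Fintype ι] [DecidableEq ι]
    {𝒳 : ι → Type*} [∀ i, Fintype (𝒳 i)]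
    (P0 : (∀ i, 𝒳 i) → ℝ) (hP0 : ∀ x, 0 ≤ P0 x)
    (α : ℝ) (hα : 0 < α ∧ α < 1)
    (J' : Finset ι)
    (Q : (∀ i, 𝒳 i) → Finset ι → ℝ)
    (hQJ' : ∀ x (J : Finset ι), J ≠ J' → Q x J = 0) :
    ∃ b ∈ polytopeB P0 α,
      (∀ b' ∈ polytopeB P0 α,
        ∑ x, ∑ J : Finset ι, Q x J * b' x J ≤ ∑ x, ∑ J : Finset ι, Q x J * b x J) ∧
      (∀ x, b x Finset.univ = b x J') ∧
      (∀ x (J : Finset ι), ¬ J' ⊆ J → b x J = 0) := by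
  obtain ⟨b₀, hb₀, hmax⟩ := exists_isMaxOn_expectedPower P0 hα.1.le Q
  refine ⟨restrictTo J' b₀, restrictTo_mem_polytopeB hP0 J' hb₀, fun b' hb' => ?_,
    fun x => by rw [restrictTo_univ, restrictTo_self],
    fun x J => restrictTo_of_not_subset J' b₀ x⟩
  calc expectedPower Q b' ≤ expectedPower Q b₀ := hmax hb'
    _ = expectedPower Q (restrictTo J' b₀) := (expectedPower_restrictTo J' hQJ' b₀).symm

/-- When the analyst's prior puts probability one on availability J', there is a
maximizer of expected power in the polytope that depends only on the coordinates in J'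
and rejects with probability 0 on reported sets not containing J'. -/
theorem stmt_11 {ι : Type*} [Fintype ι] [DecidableEq ι]
    {𝒳 : ι → Type*} [∀ i, Fintype (𝒳 i)]
    (P0 : (∀ i, 𝒳 i) → ℝ) (hP0 : ∀ x, 0 ≤ P0 x) (hP0sum : ∑ x, P0 x = 1)
    (α : ℝ) (hα : 0 < α ∧ α < 1)
    (J' : Finset ι)
    (Q : (∀ i, 𝒳 i) → Finset ι → ℝ)
    (hQ : ∀ x J, 0 ≤ Q x J) (hQsum : ∑ x, ∑ J : Finset ι, Q x J = 1)
    (hQJ' : ∀ x (J : Finset ι), J ≠ J' → Q x J = 0) :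
    ∃ b ∈ polytopeB P0 α,
      (∀ b' ∈ polytopeB P0 α,
        ∑ x, ∑ J : Finset ι, Q x J * b' x J ≤ ∑ x, ∑ J : Finset ι, Q x J * b x J) ∧
      (∀ x, b x Finset.univ = b x J') ∧
      (∀ x (J : Finset ι), ¬ J' ⊆ J → b x J = 0) :=
  stmt_11_general P0 hP0 α hα J' Q hQJ'
end

section
/- Let $\Pi$ be a finite set and for each $\pi$ let $P_\pi \in \mathbb{R}^n$ be a probability vector, and $f_\pi \in \mathbb{R}^n$ arbitrary score vectors. Define $G(p) = \max_{\pi' \in \Pi} \langle f_{\pi'}, p \rangle$. If the scoring rule $S(\pi',\pi) = \langle f_{\pi'}, P_\pi \rangle$ is proper (i.e., $S(\pi',\pi) \le S(\pi,\pi)$ for all $\pi,\pi'$), then $G$ is convex, $G(P_\pi) = S(\pi,\pi)$, and for each $\pi'$ the vector $f_{\pi'}$ is a subgradient of $G$ at $P_{\pi'}$. -/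
/-!
`G` is a maximum of linear functionals, hence convex. Properness says that at `P π` the maximum
is attained by `π` itself, so the linear functional `⟨f π, ·⟩` lies below `G` and touches it at
`P π`; this is exactly the subgradient inequality.
-/

open Finset Matrix

theorem Finset.sup'_eq_of_forall_le {α ι : Type*} [SemilatticeSup α] {s : Finset ι}
    {g : ι → α} {i : ι} (hi : i ∈ s) (h : ∀ j ∈ s, g j ≤ g i) : s.sup' ⟨i, hi⟩ g = g i :=
  le_antisymm (sup'_le _ _ h) (le_sup' g hi)

theorem ConvexOn.finset_sup' {𝕜 E β ι : Type*} [Semiring 𝕜] [PartialOrder 𝕜]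
    [AddCommMonoid E] [AddCommMonoid β] [LinearOrder β] [IsOrderedAddMonoid β] [SMul 𝕜 E]
    [Module 𝕜 β] [PosSMulStrictMono 𝕜 β] {s : Set E} {t : Finset ι} (ht : t.Nonempty)
    {g : ι → E → β} (hg : ∀ i ∈ t, ConvexOn 𝕜 s (g i)) :
    ConvexOn 𝕜 s fun x => t.sup' ht fun i => g i x := by
  refine ⟨(hg _ ht.choose_spec).1, fun x hx y hy a b ha hb hab => sup'_le _ _ fun i hi => ?_⟩
  calc g i (a • x + b • y) ≤ a • g i x + b • g i y := (hg i hi).2 hx hy ha hb hab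
    _ ≤ a • t.sup' ht (fun j => g j x) + b • t.sup' ht (fun j => g j y) := by
      gcongr <;> exact le_sup' (fun j => g j _) hi

theorem add_map_sub_le_of_forall_le {E β : Type*} [AddCommGroup E] [AddCommGroup β]
    [PartialOrder β] [IsOrderedAddMonoid β] {F : E → β} (ℓ : E →+ β) (hle : ∀ q, ℓ q ≤ F q)
    {p : E} (hp : F p = ℓ p) (q : E) : F p + ℓ (q - p) ≤ F q := by
  simpa [hp] using hle q

theorem stmt_13_general {Sg : Type*} [Fintype Sg] [Nonempty Sg] (n : ℕ)
    (P : Sg → (Fin n → ℝ))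
    (f : Sg → (Fin n → ℝ))
    (hproper : ∀ π π' : Sg, ∑ j, f π' j * P π j ≤ ∑ j, f π j * P π j)
    (G : (Fin n → ℝ) → ℝ)
    (hG : ∀ p, G p = Finset.univ.sup' Finset.univ_nonempty (fun π' : Sg => ∑ j, f π' j * p j)) :
    ConvexOn ℝ Set.univ G ∧
    (∀ π : Sg, G (P π) = ∑ j, f π j * P π j) ∧
    (∀ π' : Sg, ∀ q : Fin n → ℝ,
      G (P π') + ∑ j, f π' j * (q j - P π' j) ≤ G q) := by
  obtain rfl : G = fun p => univ.sup' univ_nonempty fun π' => f π' ⬝ᵥ p := funext hG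
  have hdiag (π : Sg) : univ.sup' univ_nonempty (fun π' => f π' ⬝ᵥ P π) = f π ⬝ᵥ P π :=
    sup'_eq_of_forall_le (mem_univ π) fun π' _ => hproper π π'
  refine ⟨ConvexOn.finset_sup' _ fun π _ => (dotProductBilin ℝ ℝ (f π)).convexOn convex_univ,
    hdiag, fun π' q => ?_⟩
  exact add_map_sub_le_of_forall_le (dotProductBilin ℝ ℝ (f π')).toAddMonoidHom
    (fun q => le_sup' (fun π => f π ⬝ᵥ q) (mem_univ π')) (hdiag π') q

/-- The upper envelope G(p) = max_{π'} ⟨f_{π'}, p⟩ is convex, matches the diagonal score,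
and the score vectors are subgradients, when the scoring rule is proper. -/
theorem stmt_13 {Sg : Type*} [Fintype Sg] [Nonempty Sg] (n : ℕ)
    (P : Sg → (Fin n → ℝ))
    (hP : ∀ π, (∀ j, 0 ≤ P π j) ∧ ∑ j, P π j = 1)
    (f : Sg → (Fin n → ℝ))
    (hproper : ∀ π π' : Sg, ∑ j, f π' j * P π j ≤ ∑ j, f π j * P π j)
    (G : (Fin n → ℝ) → ℝ)
    (hG : ∀ p, G p = Finset.univ.sup' Finset.univ_nonempty (fun π' : Sg => ∑ j, f π' j * p j)) :
    ConvexOn ℝ Set.univ G ∧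
    (∀ π : Sg, G (P π) = ∑ j, f π j * P π j) ∧
    (∀ π' : Sg, ∀ q : Fin n → ℝ,
      G (P π') + ∑ j, f π' j * (q j - P π' j) ≤ G q) :=
  stmt_13_general n P f hproper G hG
end

section
/- (Monotonicity and truthful-message conditions imply implementability.) Let all spaces be finite and let $\tilde a : \Pi \times \mathcal{X} \times \mathcal{P}(K) \to \mathbb{R}$ satisfy: (1) $\tilde a(\pi, x, I) \le \tilde a(\pi, x, J)$ for all $\pi, x$ and $I \subseteq J$ (where $\tilde a(\pi, x, J)$ depends on $x$ only through $x_J$); (2) $\mathbb{E}[\tilde a(\pi', X, J) \mid \pi] \le \mathbb{E}[\tilde a(\pi, X, J) \mid \pi]$ for all $\pi, \pi'$. Then with message space $\mathcal{M} = \Pi$ and decision rule $a(\pi, x_I, I) = \tilde a(\pi, x, I)$, the strategy of truthfully reporting $M^* = \pi$ and $I^* = J$ is optimal for the analyst: for every alternative message $\pi'$ and every $(\pi, x, J)$-measurable report rule $\tilde I \subseteq J$, $\mathbb{E}[a(\pi', X_{\tilde I}, \tilde I) \mid \pi] \le \mathbb{E}[a(\pi, X_J, J) \mid \pi]$. -/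
theorem stmt_15_general {ι : Type*} [Fintype ι] [DecidableEq ι]
    {𝒳 : ι → Type*} [∀ i, Fintype (𝒳 i)]
    {Sg : Type*} [Fintype Sg]
    (ta : Sg → (∀ i, 𝒳 i) → Finset ι → ℝ)
    (htamono : ∀ π x (I J : Finset ι), I ⊆ J → ta π x I ≤ ta π x J)
    (Pcond : Sg → (∀ i, 𝒳 i) → Finset ι → ℝ)
    (hPpos : ∀ π x J, 0 ≤ Pcond π x J)
    (htruth : ∀ π π' : Sg,
      ∑ x, ∑ J : Finset ι, Pcond π x J * ta π' x J
        ≤ ∑ x, ∑ J : Finset ι, Pcond π x J * ta π x J) :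
    ∀ (π π' : Sg) (Itil : (∀ i, 𝒳 i) → Finset ι → Finset ι),
      (∀ x J, Itil x J ⊆ J) →
      ∑ x, ∑ J : Finset ι, Pcond π x J * ta π' x (Itil x J)
        ≤ ∑ x, ∑ J : Finset ι, Pcond π x J * ta π x J := by
  intro π π' Itil hItil
  calc ∑ x, ∑ J : Finset ι, Pcond π x J * ta π' x (Itil x J)
      ≤ ∑ x, ∑ J : Finset ι, Pcond π x J * ta π' x J := by
        gcongr with x _ J _
        · exact hPpos π x J
        · exact htamono π' x _ J (hItil x J)
    _ ≤ _ := htruth π π'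

/-- Monotonicity and the truthful-message condition imply implementability:
with message space equal to the signal space and decision rule equal to the target,
truthful reporting of the signal and full reporting of the data is optimal. -/
theorem stmt_15 {ι : Type*} [Fintype ι] [DecidableEq ι]
    {𝒳 : ι → Type*} [∀ i, Fintype (𝒳 i)]
    {Sg : Type*} [Fintype Sg]
    (ta : Sg → (∀ i, 𝒳 i) → Finset ι → ℝ)
    (htadep : ∀ π x x' (J : Finset ι), (∀ i ∈ J, x i = x' i) → ta π x J = ta π x' J)
    (htamono : ∀ π x (I J : Finset ι), I ⊆ J → ta π x I ≤ ta π x J)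
    (Pcond : Sg → (∀ i, 𝒳 i) → Finset ι → ℝ)
    (hPpos : ∀ π x J, 0 ≤ Pcond π x J)
    (hPsum : ∀ π, ∑ x, ∑ J : Finset ι, Pcond π x J = 1)
    (htruth : ∀ π π' : Sg,
      ∑ x, ∑ J : Finset ι, Pcond π x J * ta π' x J
        ≤ ∑ x, ∑ J : Finset ι, Pcond π x J * ta π x J) :
    ∀ (π π' : Sg) (Itil : (∀ i, 𝒳 i) → Finset ι → Finset ι),
      (∀ x J, Itil x J ⊆ J) →
      ∑ x, ∑ J : Finset ι, Pcond π x J * ta π' x (Itil x J)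
        ≤ ∑ x, ∑ J : Finset ι, Pcond π x J * ta π x J :=
  stmt_15_general ta htamono Pcond hPpos htruth
end

section
/- (No-message implementability.) In the finite model without a pre-analysis message, a reduced-form decision function $\bar{a}(\pi, x, J)$ is implementable (consistent with the analyst choosing $I^* \in \arg\max_{I \subseteq J} a(x_I, I)$ for some decision rule $a$ depending only on the reported data) if and only if there exists $\tilde a(x, J)$, depending on $x$ only through $x_J$, that is monotone in $J$ with respect to set inclusion and satisfies $\bar a(\pi, x, J) = \tilde a(x, J)$ on the support of $(\pi, X, J)$. In particular, implementable rules cannot depend on the analyst's private signal $\pi$. -/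
/-!
When the analyst picks an optimal `I* ⊆ J`, the realized decision is the largest value of
`a x I` over all `I ⊆ J`. This upper envelope is monotone in `J` and, since each `a x I`
depends only on `x_I`, it depends on `x` only through `x_J`; it does not see the private
signal `π`. Conversely, a monotone `ã` is implemented by the rule `a = ã` with the analyst
reporting all of `J`.
-/

namespace Finset

variable {α β : Type*} [SemilatticeSup β]

def subsetSup (f : Finset α → β) (J : Finset α) : β :=
  J.powerset.sup' ⟨∅, empty_mem_powerset J⟩ f

theorem le_subsetSup (f : Finset α → β) {I J : Finset α} (hIJ : I ⊆ J) :
    f I ≤ subsetSup f J :=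
  le_sup' f (mem_powerset.mpr hIJ)

theorem subsetSup_mono (f : Finset α → β) : Monotone (subsetSup f) := fun _ _ hIJ =>
  sup'_le _ _ fun _ hK => le_subsetSup f ((mem_powerset.mp hK).trans hIJ)

theorem subsetSup_eq_of_forall_le {f : Finset α → β} {J K : Finset α} (hKJ : K ⊆ J)
    (hK : ∀ I ⊆ J, f I ≤ f K) : subsetSup f J = f K :=
  le_antisymm (sup'_le _ _ fun I hI => hK I (mem_powerset.mp hI)) (le_subsetSup f hKJ)

theorem subsetSup_congr {f g : Finset α → β} {J : Finset α} (hfg : ∀ I ⊆ J, f I = g I) :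
    subsetSup f J = subsetSup g J :=
  sup'_congr _ rfl fun I hI => hfg I (mem_powerset.mp hI)

end Finset

open Finset

theorem stmt_16_general {ι : Type*}
    {𝒳 : ι → Type*}
    {Sg : Type*}
    (P : Sg → (∀ i, 𝒳 i) → Finset ι → ℝ)
    (abar : Sg → (∀ i, 𝒳 i) → Finset ι → ℝ) :
    (∃ a : (∀ i, 𝒳 i) → Finset ι → ℝ,
      (∀ x x' (I : Finset ι), (∀ i ∈ I, x i = x' i) → a x I = a x' I) ∧
      ∃ Istar : Sg → (∀ i, 𝒳 i) → Finset ι → Finset ι,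
        (∀ π x J, Istar π x J ⊆ J) ∧
        (∀ π x (J I : Finset ι), I ⊆ J → a x I ≤ a x (Istar π x J)) ∧
        (∀ π x J, 0 < P π x J → abar π x J = a x (Istar π x J)))
    ↔
    (∃ ta : (∀ i, 𝒳 i) → Finset ι → ℝ,
      (∀ x x' (J : Finset ι), (∀ i ∈ J, x i = x' i) → ta x J = ta x' J) ∧
      (∀ x (I J : Finset ι), I ⊆ J → ta x I ≤ ta x J) ∧
      (∀ π x J, 0 < P π x J → abar π x J = ta x J)) := by
  constructor
  · rintro ⟨a, ha, Istar, hsub, hopt, hagree⟩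
    refine ⟨fun x => subsetSup (a x), fun x x' J hxx' => ?_,
      fun x _ _ hIJ => subsetSup_mono (a x) hIJ, fun π x J hP => ?_⟩
    · exact subsetSup_congr fun I hIJ => ha x x' I fun i hi => hxx' i (hIJ hi)
    · exact (hagree π x J hP).trans (subsetSup_eq_of_forall_le (hsub π x J) (hopt π x J)).symm
  · rintro ⟨ta, hta, hmono, hagree⟩
    exact ⟨ta, hta, fun _ _ J => J, fun _ _ _ => subset_rfl,
      fun _ x J I hIJ => hmono x I J hIJ, hagree⟩

/-- No-message implementability: a reduced-form decision function is implementable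
without a pre-analysis message iff it agrees, on the support of the data, with a
function of the reported data alone that is monotone w.r.t. set inclusion;
in particular it cannot depend on the analyst's private signal. -/
theorem stmt_16 {ι : Type*} [Fintype ι] [DecidableEq ι]
    {𝒳 : ι → Type*} [∀ i, Fintype (𝒳 i)]
    {Sg : Type*} [Fintype Sg]
    (P : Sg → (∀ i, 𝒳 i) → Finset ι → ℝ)
    (hPpos : ∀ π x J, 0 ≤ P π x J)
    (hPsum : ∑ π : Sg, ∑ x, ∑ J : Finset ι, P π x J = 1)
    (abar : Sg → (∀ i, 𝒳 i) → Finset ι → ℝ) :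
    (∃ a : (∀ i, 𝒳 i) → Finset ι → ℝ,
      (∀ x x' (I : Finset ι), (∀ i ∈ I, x i = x' i) → a x I = a x' I) ∧
      ∃ Istar : Sg → (∀ i, 𝒳 i) → Finset ι → Finset ι,
        (∀ π x J, Istar π x J ⊆ J) ∧
        (∀ π x (J I : Finset ι), I ⊆ J → a x I ≤ a x (Istar π x J)) ∧
        (∀ π x J, 0 < P π x J → abar π x J = a x (Istar π x J)))
    ↔
    (∃ ta : (∀ i, 𝒳 i) → Finset ι → ℝ,
      (∀ x x' (J : Finset ι), (∀ i ∈ J, x i = x' i) → ta x J = ta x' J) ∧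
      (∀ x (I J : Finset ι), I ⊆ J → ta x I ≤ ta x J) ∧
      (∀ π x J, 0 < P π x J → abar π x J = ta x J)) :=
  stmt_16_general P abar
end
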